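/- Let $q \ge r \ge 2$ be integers, $\alpha > 1$ a real number, $Q$ an $r$-graph on $q$ vertices, and $\delta \in (0,1)$. There exists $N_1 = N_1(\delta, q, \alpha)$ such that the following holds for every $n \ge N_1$: if $\mathcal{H}$ is an $r$-graph on vertex set $[n]$ and $\mathbf{x} = (x_1,\ldots,x_n)$ is a nonnegative vector in $\mathrm{OPT}_{\alpha,Q}(\mathcal{H})$ with some coordinate satisfying $x_i \le (1-\delta) n^{-1/\alpha}$, then the induced subgraph $\mathcal{H} - i$ obtained by deleting vertex $i$ satisfies $\lambda_{\alpha,Q}(\mathcal{H} - i) \ge \big(1 - \frac{q(\alpha-1)}{\alpha}\big(1 - \frac{\delta}{2}\big)\frac{1}{n}\big)\, \lambda_{\alpha,Q}(\mathcal{H})$. -/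

import Mathlib

open scoped Classical
open Finset Filter Real

/-- An `r`-uniform hypergraph on vertex set `Fin n`. -/
structure RGraph (r n : ℕ) where
  edges : Finset (Finset (Fin n))
  card_eq : ∀ e ∈ edges, e.card = r

/-- The set (as a `Finset`) of injective homomorphisms from `Q` to `H`. -/
noncomputable def Inj {r a b : ℕ} (Q : RGraph r a) (H : RGraph r b) :
    Finset (Fin a → Fin b) :=
  Finset.univ.filter fun φ => Function.Injective φ ∧ ∀ e ∈ Q.edges, e.image φ ∈ H.edges

/-- The Lagrangian `Q`-polynomial of `H`. -/
noncomputable def lagPoly {r a n : ℕ} (Q : RGraph r a) (H : RGraph r n)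
    (x : Fin n → ℝ) : ℝ :=
  ∑ φ ∈ Inj Q H, ∏ i ∈ Finset.univ.image φ, x i

/-- The domain `Δ_α^{n-1} = {x : |x_1|^α + ⋯ + |x_n|^α = 1}`. -/
def simplex (α : ℝ) (n : ℕ) : Set (Fin n → ℝ) :=
  {x | ∑ i, |x i| ^ α = 1}

/-- The `(α,Q)`-spectral radius of `H`. -/
noncomputable def specRad (α : ℝ) {r a n : ℕ} (Q : RGraph r a) (H : RGraph r n) : ℝ :=
  sSup (lagPoly Q H '' simplex α n)

/-- The set of optimal vectors. -/
noncomputable def OPT (α : ℝ) {r a n : ℕ} (Q : RGraph r a) (H : RGraph r n) :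
    Set (Fin n → ℝ) :=
  {x ∈ simplex α n | lagPoly Q H x = specRad α Q H}
/-- The induced subgraph `H - i` obtained by deleting the vertex `i`, with the remaining
vertices relabelled by the order-preserving bijection `Fin.succAbove i`. -/
def delVertex {r n : ℕ} (H : RGraph r (n + 1)) (i : Fin (n + 1)) : RGraph r n where
  edges := Finset.univ.filter fun e : Finset (Fin n) => e.image i.succAbove ∈ H.edges
  card_eq := by
    intro e he
    rw [Finset.mem_filter] at he
    have h := H.card_eq _ he.2
    rwa [Finset.card_image_of_injective _ Fin.succAbove_right_injective] at h

/-!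
At an optimal vector `x` the Lagrange condition for the coordinate `i` reads
`x i * ∂ᵢP(x) = q * x i ^ α * λ`; it follows by moving `x i` alone, since the homogeneity of `P`
gives `P(z) ≤ ‖z‖_α ^ q * λ` for every `z`. As `P(x) = x i * ∂ᵢP(x) + P_{H-i}(x|_{H-i})`, the
restriction of `x` to `H - i` has value `(1 - q t) λ` with `t = x i ^ α`, and `α`-norm
`(1 - t) ^ (1/α)`. Normalising it gives `λ(H - i) ≥ (1 - q t) (1 - t) ^ (-q/α) λ
≥ (1 - q t) (1 + q t / α) λ`, which for `t ≤ (1 - δ) / n` and large `n` beats the stated bound.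
-/

lemma one_add_mul_mul_one_sub_rpow_le_one {p t : ℝ} (hp : 0 ≤ p) (ht1 : t < 1) :
    (1 + p * t) * (1 - t) ^ p ≤ 1 := by
  have h1t : 0 < 1 - t := by linarith
  have hpow : (1 - t) ^ p ≤ exp (-(p * t)) := by
    rw [rpow_def_of_pos h1t, exp_le_exp]
    nlinarith [log_le_sub_one_of_pos h1t]
  calc (1 + p * t) * (1 - t) ^ p ≤ exp (p * t) * exp (-(p * t)) :=
        mul_le_mul (by linarith [add_one_le_exp (p * t)]) hpow (by positivity) (by positivity)
    _ = 1 := by rw [← exp_add, add_neg_cancel, exp_zero]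

lemma one_sub_mul_rpow_le_one_sub_mul {q α δ t m : ℝ} (hq : 0 ≤ q) (hα : 1 < α) (hδ : 0 ≤ δ)
    (hm : 0 < m) (ht0 : 0 ≤ t) (ht1 : t < 1) (htm : t * m ≤ 1 - δ) (hqm : q ≤ m)
    (hqδ : 2 * q ≤ (α - 1) * δ * m) :
    (1 - q * (α - 1) / α * (1 - δ / 2) * (1 / m)) * (1 - t) ^ (q / α) ≤ 1 - q * t := by
  have hα0 : 0 < α := by linarith
  have hqt : q * t ≤ 1 := by
    rw [← mul_le_mul_iff_left₀ hm]
    nlinarith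
  have hqt_half : q * t ≤ (α - 1) * δ / 2 := by
    rw [← mul_le_mul_iff_left₀ hm]
    nlinarith
  have hkey : 1 - q * (α - 1) / α * (1 - δ / 2) * (1 / m) ≤ (1 - q * t) * (1 + q / α * t) := by
    rw [← sub_nonneg]
    have h : (1 - q * t) * (1 + q / α * t) - (1 - q * (α - 1) / α * (1 - δ / 2) * (1 / m)) =
        q / (α * m) * ((α - 1) * (1 - δ / 2) - (α - 1) * (t * m) - q * t * (t * m)) := by
      field_simp
      ring
    rw [h]
    have h1 : (α - 1) * (t * m) ≤ (α - 1) * (1 - δ) := by gcongr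
    have h2 : q * t * (t * m) ≤ q * t :=
      mul_le_of_le_one_right (mul_nonneg hq ht0) (by linarith)
    exact mul_nonneg (by positivity) (by linarith)
  calc (1 - q * (α - 1) / α * (1 - δ / 2) * (1 / m)) * (1 - t) ^ (q / α)
      ≤ (1 - q * t) * ((1 + q / α * t) * (1 - t) ^ (q / α)) := by
        rw [← mul_assoc]
        exact mul_le_mul_of_nonneg_right hkey (rpow_nonneg (by linarith) _)
    _ ≤ 1 - q * t := mul_le_of_le_one_right (by linarith)
        (one_add_mul_mul_one_sub_rpow_le_one (by positivity) ht1)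

lemma rpow_mul_le_of_le_mul_rpow_neg_inv {a b m α : ℝ} (hα : 1 ≤ α) (ha : 0 ≤ a) (hb0 : 0 ≤ b)
    (hb1 : b ≤ 1) (hm : 0 < m) (h : a ≤ b * m ^ (-1 / α)) : a ^ α * m ≤ b := by
  have hα0 : 0 < α := by linarith
  have hmα : (m ^ (-1 / α)) ^ α = m⁻¹ := by
    rw [← rpow_mul hm.le, div_mul_cancel₀ _ hα0.ne', rpow_neg_one]
  have hle : a ^ α ≤ b ^ α * m⁻¹ := by
    rw [← hmα, ← mul_rpow hb0 (rpow_nonneg hm.le _)]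
    exact rpow_le_rpow ha h hα0.le
  calc a ^ α * m ≤ b ^ α * m⁻¹ * m := mul_le_mul_of_nonneg_right hle hm.le
    _ = b ^ α := by field_simp
    _ ≤ b := rpow_le_self_of_le_one hb0 hb1 hα

section LagrangianPolynomial

variable {r q n : ℕ} (Q : RGraph r q)

lemma card_image_of_mem_Inj {H : RGraph r n} {φ : Fin q → Fin n} (hφ : φ ∈ Inj Q H) :
    (univ.image φ).card = q := by
  rw [Inj, mem_filter] at hφ
  rw [card_image_of_injective _ hφ.2.1, card_univ, Fintype.card_fin]

lemma lagPoly_smul (H : RGraph r n) (c : ℝ) (z : Fin n → ℝ) :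
    lagPoly Q H (c • z) = c ^ q * lagPoly Q H z := by
  rw [lagPoly, lagPoly, mul_sum]
  refine sum_congr rfl fun φ hφ => ?_
  simp only [Pi.smul_apply, smul_eq_mul, prod_mul_distrib, prod_const,
    card_image_of_mem_Inj Q hφ]

lemma lagPoly_nonneg (H : RGraph r n) {z : Fin n → ℝ} (hz : ∀ j, 0 ≤ z j) :
    0 ≤ lagPoly Q H z :=
  sum_nonneg fun _ _ => prod_nonneg fun j _ => hz j

lemma abs_le_one_of_mem_simplex {α : ℝ} (hα : 0 < α) {z : Fin n → ℝ} (hz : z ∈ simplex α n)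
    (j : Fin n) : |z j| ≤ 1 := by
  have hj : |z j| ^ α ≤ 1 :=
    hz ▸ single_le_sum (fun k _ => rpow_nonneg (abs_nonneg (z k)) α) (mem_univ j)
  exact le_of_not_gt fun h => hj.not_gt (one_lt_rpow h hα)

lemma bddAbove_lagPoly_image_simplex (H : RGraph r n) {α : ℝ} (hα : 0 < α) :
    BddAbove (lagPoly Q H '' simplex α n) := by
  refine ⟨(Inj Q H).card, ?_⟩
  rintro _ ⟨z, hz, rfl⟩
  calc lagPoly Q H z ≤ ∑ φ ∈ Inj Q H, |∏ j ∈ univ.image φ, z j| :=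
        sum_le_sum fun φ _ => le_abs_self _
    _ ≤ ∑ φ ∈ Inj Q H, 1 := sum_le_sum fun φ _ => by
        rw [abs_prod]
        exact prod_le_one (fun j _ => abs_nonneg _)
          fun j _ => abs_le_one_of_mem_simplex hα hz j
    _ = (Inj Q H).card := by simp

lemma lagPoly_le_specRad (H : RGraph r n) {α : ℝ} (hα : 0 < α) {z : Fin n → ℝ}
    (hz : z ∈ simplex α n) : lagPoly Q H z ≤ specRad α Q H :=
  le_csSup (bddAbove_lagPoly_image_simplex Q H hα) (Set.mem_image_of_mem _ hz)

lemma lagPoly_le_rpow_mul_specRad (H : RGraph r n) {α : ℝ} (hα : 0 < α) {z : Fin n → ℝ}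
    (hz : 0 < ∑ j, |z j| ^ α) :
    lagPoly Q H z ≤ (∑ j, |z j| ^ α) ^ ((q : ℝ) / α) * specRad α Q H := by
  set S := ∑ j, |z j| ^ α
  set s := S ^ (1 / α)
  have hs : 0 < s := rpow_pos_of_pos hz _
  have hsα : s ^ α = S := by rw [← rpow_mul hz.le, one_div_mul_cancel hα.ne', rpow_one]
  have hsq : s ^ q = S ^ ((q : ℝ) / α) := by
    rw [← rpow_natCast, ← rpow_mul hz.le, one_div_mul_eq_div]
  have hmem : s⁻¹ • z ∈ simplex α n := by
    simp only [simplex, Set.mem_ofPred_eq, Pi.smul_apply, smul_eq_mul, abs_mul,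
      abs_inv, abs_of_pos hs, mul_rpow (inv_nonneg.2 hs.le) (abs_nonneg _), ← mul_sum,
      inv_rpow hs.le, hsα]
    exact inv_mul_cancel₀ hz.ne'
  calc lagPoly Q H z = s ^ q * lagPoly Q H (s⁻¹ • z) := by
        rw [← lagPoly_smul, smul_inv_smul₀ hs.ne']
    _ ≤ s ^ q * specRad α Q H :=
        mul_le_mul_of_nonneg_left (lagPoly_le_specRad Q H hα hmem) (by positivity)
    _ = _ := by rw [hsq]

end LagrangianPolynomial

section VertexDecomposition

variable {r q n : ℕ} (Q : RGraph r q) (H : RGraph r (n + 1)) (i : Fin (n + 1))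

/-- `∂ᵢP(x)`: the copies of `Q` through `i`, with the factor `x i` removed. -/
noncomputable def linkPoly (x : Fin (n + 1) → ℝ) : ℝ :=
  ∑ φ ∈ (Inj Q H).filter (fun φ => i ∈ univ.image φ), ∏ j ∈ (univ.image φ).erase i, x j

lemma linkPoly_update_self (x : Fin (n + 1) → ℝ) (a : ℝ) :
    linkPoly Q H i (Function.update x i a) = linkPoly Q H i x :=
  sum_congr rfl fun _ _ => prod_congr rfl fun _ hj =>
    Function.update_of_ne (ne_of_mem_erase hj) _ _

lemma lagPoly_delVertex_comp_succAbove (x : Fin (n + 1) → ℝ) :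
    lagPoly Q (delVertex H i) (x ∘ i.succAbove) =
      ∑ φ ∈ (Inj Q H).filter (fun φ => i ∉ univ.image φ), ∏ j ∈ univ.image φ, x j := by
  refine sum_bij (fun ψ _ => i.succAbove ∘ ψ) ?_ ?_ ?_ ?_
  · intro ψ hψ
    simp only [Inj, delVertex, mem_filter, mem_univ, true_and, image_image, mem_image,
      not_exists] at hψ ⊢
    exact ⟨⟨Fin.succAbove_right_injective.comp hψ.1, hψ.2⟩, fun a => Fin.succAbove_ne i (ψ a)⟩
  · intro ψ₁ _ ψ₂ _ h
    exact funext fun a => Fin.succAbove_right_injective (congrFun h a)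
  · intro φ hφ
    simp only [Inj, mem_filter, mem_univ, true_and, mem_image, not_exists] at hφ
    obtain ⟨⟨hinj, hedge⟩, hnot⟩ := hφ
    choose ψ hψ using fun a => Fin.exists_succAbove_eq (hnot a)
    have hcomp : i.succAbove ∘ ψ = φ := funext hψ
    refine ⟨ψ, ?_, hcomp⟩
    simp only [Inj, delVertex, mem_filter, mem_univ, true_and, image_image, hcomp]
    exact ⟨Function.Injective.of_comp (hcomp ▸ hinj), hedge⟩
  · intro ψ _
    rw [← image_image, prod_image fun a _ b _ h => Fin.succAbove_right_injective h]
    rfl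

lemma lagPoly_eq_mul_linkPoly_add (x : Fin (n + 1) → ℝ) :
    lagPoly Q H x = x i * linkPoly Q H i x + lagPoly Q (delVertex H i) (x ∘ i.succAbove) := by
  rw [lagPoly, linkPoly, lagPoly_delVertex_comp_succAbove, mul_sum,
    ← sum_filter_add_sum_filter_not (Inj Q H) (fun φ => i ∈ univ.image φ)]
  congr 1
  exact sum_congr rfl fun φ hφ => (mul_prod_erase _ _ (mem_filter.1 hφ).2).symm

lemma lagPoly_update_self (x : Fin (n + 1) → ℝ) (a : ℝ) :
    lagPoly Q H (Function.update x i a) =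
      a * linkPoly Q H i x + lagPoly Q (delVertex H i) (x ∘ i.succAbove) := by
  rw [lagPoly_eq_mul_linkPoly_add, linkPoly_update_self, Function.update_self,
    Function.update_comp_eq_of_forall_ne _ _ (Fin.succAbove_ne i)]

end VertexDecomposition

section Optimality

variable {r q n : ℕ} (Q : RGraph r q) {H : RGraph r (n + 1)} {α : ℝ}

lemma sum_abs_rpow_eq_add (x : Fin (n + 1) → ℝ) (i : Fin (n + 1)) :
    ∑ j, |x j| ^ α = |x i| ^ α + ∑ k, |x (i.succAbove k)| ^ α :=
  Fin.sum_univ_succAbove _ i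

theorem mul_linkPoly_eq_of_mem_OPT (hα : 0 < α) {x : Fin (n + 1) → ℝ} (hx : x ∈ OPT α Q H)
    (i : Fin (n + 1)) (hxi : 0 ≤ x i) :
    x i * linkPoly Q H i x = q * x i ^ α * specRad α Q H := by
  rcases hxi.eq_or_lt with hxi0 | hxi0
  · rw [← hxi0, zero_rpow hα.ne']
    ring
  set ρ := specRad α Q H
  set L := linkPoly Q H i x
  set B := lagPoly Q (delVertex H i) (x ∘ i.succAbove)
  set rest := ∑ k, |x (i.succAbove k)| ^ α
  have hrest : 0 ≤ rest := sum_nonneg fun k _ => rpow_nonneg (abs_nonneg _) α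
  have hnorm : x i ^ α + rest = 1 := by
    rw [← abs_of_pos hxi0, ← sum_abs_rpow_eq_add]
    exact hx.1
  have hval : x i * L + B = ρ := by
    rw [← lagPoly_eq_mul_linkPoly_add]
    exact hx.2
  let f : ℝ → ℝ := fun h => ρ * ((x i + h) ^ α + rest) ^ ((q : ℝ) / α) - ((x i + h) * L + B)
  have hmin : IsLocalMin f 0 := by
    filter_upwards [Ioi_mem_nhds (neg_lt_zero.2 hxi0)] with h hh
    have hpos : 0 < x i + h := by linarith [Set.mem_Ioi.1 hh]
    have hsum : ∑ j, |Function.update x i (x i + h) j| ^ α = (x i + h) ^ α + rest := by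
      simp only [sum_abs_rpow_eq_add _ i, Function.update_self, abs_of_pos hpos,
        Function.update_of_ne (Fin.succAbove_ne i _), rest]
    have hle := lagPoly_le_rpow_mul_specRad Q H hα
      (hsum ▸ add_pos_of_pos_of_nonneg (rpow_pos_of_pos hpos α) hrest)
    rw [hsum, lagPoly_update_self] at hle
    simp only [f, add_zero, hnorm, one_rpow, mul_one, hval, sub_self]
    linarith
  have hderiv : HasDerivAt f (ρ * (1 * α * (x i + 0) ^ (α - 1) * ((q : ℝ) / α) *
      ((x i + 0) ^ α + rest) ^ ((q : ℝ) / α - 1)) - 1 * L) 0 := by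
    have hshift : HasDerivAt (fun h => x i + h) 1 0 := (hasDerivAt_id' 0).const_add (x i)
    refine HasDerivAt.sub (HasDerivAt.const_mul ρ ?_) ((hshift.mul_const L).add_const B)
    refine ((hshift.rpow_const (Or.inl (by positivity))).add_const rest).rpow_const
      (Or.inl ?_)
    simp [hnorm]
  have hL := hmin.hasDerivAt_eq_zero hderiv
  simp only [add_zero, hnorm, one_rpow, mul_one, one_mul] at hL
  rw [rpow_sub_one hxi0.ne'] at hL
  field_simp at hL
  linear_combination -hL

theorem one_sub_mul_rpow_mul_specRad_le (hα : 0 < α) {x : Fin (n + 1) → ℝ}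
    (hx : x ∈ OPT α Q H) (i : Fin (n + 1)) (hxi : 0 ≤ x i) (hxi1 : x i ^ α < 1) :
    (1 - q * x i ^ α) * specRad α Q H ≤
      (1 - x i ^ α) ^ ((q : ℝ) / α) * specRad α Q (delVertex H i) := by
  have hdel :
      lagPoly Q (delVertex H i) (x ∘ i.succAbove) = (1 - q * x i ^ α) * specRad α Q H := by
    have h := lagPoly_eq_mul_linkPoly_add Q H i x
    rw [hx.2, mul_linkPoly_eq_of_mem_OPT Q hα hx i hxi] at h
    linarith
  have hsum : ∑ k, |(x ∘ i.succAbove) k| ^ α = 1 - x i ^ α := by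
    have h : ∑ j, |x j| ^ α = 1 := hx.1
    rw [sum_abs_rpow_eq_add x i, abs_of_nonneg hxi] at h
    simp only [Function.comp_apply]
    linarith
  rw [← hdel, ← hsum]
  exact lagPoly_le_rpow_mul_specRad Q (delVertex H i) hα (hsum ▸ sub_pos.2 hxi1)

end Optimality

/-- The `n` of the paper is the `n + 1` here. -/
theorem delete_light_vertex_general {r q : ℕ}
    {α δ : ℝ} (hα : 1 < α) (hδ : δ ∈ Set.Ioo (0 : ℝ) 1) (Q : RGraph r q) :
    ∃ N1 : ℕ, ∀ n : ℕ, N1 ≤ n + 1 → ∀ H : RGraph r (n + 1),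
      ∀ x ∈ OPT α Q H, (∀ j, 0 ≤ x j) →
      ∀ i : Fin (n + 1), x i ≤ (1 - δ) * ((n : ℝ) + 1) ^ (-(1 : ℝ) / α) →
        (1 - q * (α - 1) / α * (1 - δ / 2) * (1 / ((n : ℝ) + 1))) * specRad α Q H
          ≤ specRad α Q (delVertex H i) := by
  obtain ⟨hδ0, hδ1⟩ := hδ
  refine ⟨⌈2 * q / ((α - 1) * δ)⌉₊ + q, fun n hn H x hx hx0 i hxi => ?_⟩
  have hε : 0 < (α - 1) * δ := mul_pos (sub_pos.2 hα) hδ0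
  have hm : 2 * q / ((α - 1) * δ) + q ≤ (n : ℝ) + 1 := by
    have h := Nat.le_ceil (2 * q / ((α - 1) * δ) : ℝ)
    have h' : ((⌈2 * q / ((α - 1) * δ)⌉₊ + q : ℕ) : ℝ) ≤ (n + 1 : ℕ) := by exact_mod_cast hn
    push_cast at h'
    linarith
  have hqm : (q : ℝ) ≤ n + 1 := by
    linarith [div_nonneg (by positivity : (0 : ℝ) ≤ 2 * q) hε.le]
  have hqδ : 2 * q ≤ (α - 1) * δ * ((n : ℝ) + 1) := by
    have h : 2 * q / ((α - 1) * δ) ≤ n + 1 := by linarith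
    rw [div_le_iff₀ hε] at h
    linarith
  have htm := rpow_mul_le_of_le_mul_rpow_neg_inv hα.le (hx0 i) (by linarith) (by linarith)
    (by positivity) hxi
  have ht0 : 0 ≤ x i ^ α := rpow_nonneg (hx0 i) α
  have ht1 : x i ^ α < 1 := by nlinarith
  have hgain := one_sub_mul_rpow_le_one_sub_mul (Nat.cast_nonneg q) hα hδ0.le (by positivity)
    ht0 ht1 htm hqm hqδ
  have hdel := one_sub_mul_rpow_mul_specRad_le Q (by linarith) hx i (hx0 i) ht1
  have hρ : 0 ≤ specRad α Q H := hx.2 ▸ lagPoly_nonneg Q H hx0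
  refine le_of_mul_le_mul_left ?_ (rpow_pos_of_pos (sub_pos.2 ht1) ((q : ℝ) / α))
  calc (1 - x i ^ α) ^ ((q : ℝ) / α) *
        ((1 - q * (α - 1) / α * (1 - δ / 2) * (1 / ((n : ℝ) + 1))) * specRad α Q H)
      = (1 - q * (α - 1) / α * (1 - δ / 2) * (1 / ((n : ℝ) + 1))) *
          (1 - x i ^ α) ^ ((q : ℝ) / α) * specRad α Q H := by ring
    _ ≤ (1 - q * x i ^ α) * specRad α Q H := mul_le_mul_of_nonneg_right hgain hρ
    _ ≤ _ := hdel

/-- **Lemma (deleting a light vertex, first part):** removing a vertex of small weight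
does not decrease the `(α,Q)`-spectral radius too much. (The `n` of the paper is the
`n + 1` here.) -/
theorem delete_light_vertex {r q : ℕ} (hr : 2 ≤ r) (hrq : r ≤ q)
    {α δ : ℝ} (hα : 1 < α) (hδ : δ ∈ Set.Ioo (0 : ℝ) 1) (Q : RGraph r q) :
    ∃ N1 : ℕ, ∀ n : ℕ, N1 ≤ n + 1 → ∀ H : RGraph r (n + 1),
      ∀ x ∈ OPT α Q H, (∀ j, 0 ≤ x j) →
      ∀ i : Fin (n + 1), x i ≤ (1 - δ) * ((n : ℝ) + 1) ^ (-(1 : ℝ) / α) →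
        (1 - q * (α - 1) / α * (1 - δ / 2) * (1 / ((n : ℝ) + 1))) * specRad α Q H
          ≤ specRad α Q (delVertex H i) :=
  delete_light_vertex_general hα hδ Q
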